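/- For m ≥ 2, let p_1(n) := v_n(m; x, s) be defined by v_0 = m, v_i = x^i for 1 ≤ i ≤ m-1, and v_{n+m} = x·v_{n+m-1} - s·v_n. Then the substitution q(n) := p_1(n) evaluated at x ↦ x+1, s ↦ x satisfies: for every n ≥ 1 and every r with 1 ≤ r ≤ ⌊n/m⌋, the coefficient of x^r in q(n) vanishes; moreover the constant coefficient of q(n) is 1. -/
import Mathlib


/-- `v_n(m; x, s)`: `v_0 = m`, `v_i = x^i` for `1 ≤ i ≤ m-1`, and
`v_{n+m} = x·v_{n+m-1} - s·v_n`. -/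
def vGen {R : Type*} [CommRing R] (m : ℕ) (x s : R) : ℕ → R
  | n =>
    if n < m ∨ m = 0 then (if n = 0 then (m : R) else x ^ n)
    else x * vGen m x s (n - 1) - s * vGen m x s (n - m)
  termination_by n => n
  decreasing_by all_goals omega

lemma vGen_small {R : Type*} [CommRing R] {m n : ℕ} (x s : R) (h : n < m) :
    vGen m x s n = if n = 0 then (m : R) else x ^ n := by
  rw [vGen]; simp [h]

lemma vGen_rec {R : Type*} [CommRing R] {m n : ℕ} (x s : R) (hm : 0 < m) (h : m ≤ n) :
    vGen m x s n = x * vGen m x s (n - 1) - s * vGen m x s (n - m) := by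
  rw [vGen]
  have : ¬ (n < m ∨ m = 0) := by omega
  simp [this]

open Polynomial

/-- `W m n = vGen m (X+1) X n - 1`. -/
noncomputable def Wgen (m n : ℕ) : ℤ[X] := vGen m (X + 1 : ℤ[X]) X n - 1

lemma Wgen_base {m n : ℕ} (h1 : 1 ≤ n) (h2 : n < m) :
    Wgen m n = (X + 1 : ℤ[X]) ^ n - 1 := by
  unfold Wgen
  rw [vGen_small _ _ h2, if_neg (by omega : n ≠ 0)]

lemma Wgen_rec {m n : ℕ} (hm : 0 < m) (h : m ≤ n) :
    Wgen m n = (X + 1) * Wgen m (n - 1) - X * Wgen m (n - m) := by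
  unfold Wgen
  rw [vGen_rec _ _ hm h]
  ring

/-- The (m-1)-term recurrence for `W`. -/
lemma Wgen_sum_rec {m : ℕ} (hm : 2 ≤ m) : ∀ n, m ≤ n →
    Wgen m n = X * ∑ i ∈ Finset.range (m - 1), Wgen m (n - 1 - i) := by
  intro n hn
  induction n, hn using Nat.le_induction with
  | base =>
    -- n = m case
    have hre : ∑ i ∈ Finset.range (m - 1), Wgen m (m - 1 - i)
        = ∑ j ∈ Finset.range (m - 1), Wgen m (j + 1) := by
      have := Finset.sum_range_reflect (fun j => Wgen m (j + 1)) (m - 1)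
      rw [← this]
      apply Finset.sum_congr rfl
      intro i hi
      simp only [Finset.mem_range] at hi
      congr 1
      omega
    rw [hre]
    have hval : ∑ j ∈ Finset.range (m - 1), Wgen m (j + 1)
        = ∑ j ∈ Finset.range (m - 1), ((X + 1 : ℤ[X]) ^ (j + 1) - 1) := by
      apply Finset.sum_congr rfl
      intro j hj
      simp only [Finset.mem_range] at hj
      exact Wgen_base (by omega) (by omega)
    rw [hval]
    -- LHS: W m = (X+1)^m - m*X - 1
    have hWm : Wgen m m = (X + 1 : ℤ[X]) ^ m - (m : ℤ[X]) * X - 1 := by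
      unfold Wgen
      rw [vGen_rec _ _ (by omega) le_rfl]
      rw [vGen_small _ _ (by omega : m - 1 < m), vGen_small _ _ (by omega : m - m < m)]
      rw [if_neg (by omega : ¬ (m - 1 = 0)), if_pos (by omega : m - m = 0)]
      have : (X + 1 : ℤ[X]) * (X + 1) ^ (m - 1) = (X + 1) ^ m := by
        rw [← pow_succ']
        congr 1
        omega
      rw [this]
      ring
    rw [hWm]
    -- use geometric sum
    have hgeom : (∑ i ∈ Finset.range m, ((X : ℤ[X]) + 1) ^ i) * X = (X + 1) ^ m - 1 := by
      have := geom_sum_mul ((X : ℤ[X]) + 1) m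
      simpa using this
    have hsplit : ∑ i ∈ Finset.range m, ((X : ℤ[X]) + 1) ^ i
        = ∑ i ∈ Finset.range (m - 1), ((X : ℤ[X]) + 1) ^ (i + 1) + 1 := by
      have h' : m = (m - 1) + 1 := by omega
      rw [h', Finset.sum_range_succ']
      simp
    rw [hsplit] at hgeom
    have hsum : ∑ j ∈ Finset.range (m - 1), ((X + 1 : ℤ[X]) ^ (j + 1) - 1)
        = ∑ j ∈ Finset.range (m - 1), ((X + 1 : ℤ[X]) ^ (j + 1)) - (m - 1 : ℕ) := by
      rw [Finset.sum_sub_distrib]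
      simp
    rw [hsum]
    have hcast : ((m - 1 : ℕ) : ℤ[X]) = (m : ℤ[X]) - 1 := by
      have h' : m = (m - 1) + 1 := by omega
      rw [h']
      push_cast
      ring
    rw [hcast]
    linear_combination -hgeom
  | succ n hn ih =>
    -- step: n ≥ m, know A(n), prove A(n+1)
    have hrec : Wgen m (n + 1) = (X + 1) * Wgen m n - X * Wgen m (n + 1 - m) := by
      have := Wgen_rec (m := m) (n := n + 1) (by omega) (by omega)
      simpa using this
    -- split RHS sum: ∑_{i<m-1} W(n+1-1-i) = ∑_{i<m-2} W(n-1-i) + W n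
    have hsplit : ∑ i ∈ Finset.range (m - 1), Wgen m (n + 1 - 1 - i)
        = ∑ i ∈ Finset.range (m - 2), Wgen m (n - 1 - i) + Wgen m n := by
      have h' : m - 1 = (m - 2) + 1 := by omega
      rw [h', Finset.sum_range_succ']
      have e1 : ∀ i, n + 1 - 1 - (i + 1) = n - 1 - i := by intro i; omega
      have e2 : n + 1 - 1 - 0 = n := by omega
      simp only [e1, e2]
    -- split IH sum: ∑_{i<m-1} W(n-1-i) = ∑_{i<m-2} W(n-1-i) + W(n+1-m)
    have hsplit2 : ∑ i ∈ Finset.range (m - 1), Wgen m (n - 1 - i)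
        = ∑ i ∈ Finset.range (m - 2), Wgen m (n - 1 - i) + Wgen m (n + 1 - m) := by
      have h' : m - 1 = (m - 2) + 1 := by omega
      rw [h', Finset.sum_range_succ]
      congr 2
      omega
    rw [hsplit2] at ih
    rw [hrec, hsplit]
    linear_combination ih

/-- Divisibility: `X^((n-1)/(m-1)+1) ∣ W m n` for `n ≥ 1`. -/
lemma Wgen_dvd {m : ℕ} (hm : 2 ≤ m) : ∀ n, 1 ≤ n →
    (X : ℤ[X]) ^ ((n - 1) / (m - 1) + 1) ∣ Wgen m n := by
  intro n
  induction n using Nat.strong_induction_on with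
  | _ n ih =>
    intro hn
    by_cases hcase : n < m
    · -- base case
      rw [Wgen_base hn hcase]
      have he : (n - 1) / (m - 1) = 0 := Nat.div_eq_of_lt (by omega)
      rw [he, pow_one]
      have := sub_dvd_pow_sub_pow ((X : ℤ[X]) + 1) 1 n
      simpa using this
    · push_neg at hcase
      rw [Wgen_sum_rec hm n hcase]
      have key : (X : ℤ[X]) ^ ((n - 1) / (m - 1)) ∣
          ∑ i ∈ Finset.range (m - 1), Wgen m (n - 1 - i) := by
        apply Finset.dvd_sum
        intro i hi
        simp only [Finset.mem_range] at hi
        set k := n - 1 - i with hk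
        have hk1 : 1 ≤ k := by omega
        have hkn : k < n := by omega
        have hdvd := ih k hkn hk1
        refine dvd_trans (pow_dvd_pow _ ?_) hdvd
        -- (n-1)/(m-1) ≤ (k-1)/(m-1) + 1
        have h1 : (n - 1) ≤ (k - 1) + (m - 1) := by omega
        calc (n - 1) / (m - 1) ≤ ((k - 1) + (m - 1)) / (m - 1) :=
              Nat.div_le_div_right h1
          _ = (k - 1) / (m - 1) + 1 := Nat.add_div_right _ (by omega)
      obtain ⟨c, hc⟩ := key
      exact ⟨c, by rw [hc]; ring⟩

open Polynomial in
/-- With `q(n) := v_n(m; x+1, x) ∈ ℤ[x]`: for `n ≥ 1` the coefficient of `x^r` in `q(n)`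
vanishes for `1 ≤ r ≤ ⌊n/m⌋`, and the constant coefficient of `q(n)` is `1`. -/
theorem vGen_substituted_coeffs (m : ℕ) (hm : 2 ≤ m) (n : ℕ) (hn : 1 ≤ n) :
    (∀ r, 1 ≤ r → r ≤ n / m → (vGen m (X + 1 : Polynomial ℤ) X n).coeff r = 0) ∧
      (vGen m (X + 1 : Polynomial ℤ) X n).coeff 0 = 1 := by
  have hdvd := Wgen_dvd hm n hn
  rw [Polynomial.X_pow_dvd_iff] at hdvd
  have hq : vGen m (X + 1 : Polynomial ℤ) X n = Wgen m n + 1 := by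
    unfold Wgen; ring
  -- n / m ≤ (n-1)/(m-1)
  have hle : n / m ≤ (n - 1) / (m - 1) := by
    rcases Nat.eq_zero_or_pos (n / m) with h0 | hpos
    · rw [h0]; exact Nat.zero_le _
    · rw [Nat.le_div_iff_mul_le (by omega : 0 < m - 1)]
      have h1 : n / m * m ≤ n := Nat.div_mul_le_self n m
      have h2 : n / m * (m - 1) + n / m = n / m * m := by
        rw [← Nat.mul_succ]
        congr 1
        omega
      omega
  constructor
  · intro r hr1 hr2
    have hr3 : r < (n - 1) / (m - 1) + 1 :=
      Nat.lt_succ_of_le (le_trans hr2 hle)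
    have hr0 : r ≠ 0 := by omega
    rw [hq, Polynomial.coeff_add, Polynomial.coeff_one, hdvd r hr3, if_neg hr0]
    ring
  · rw [hq, Polynomial.coeff_add, Polynomial.coeff_one, hdvd 0 (Nat.succ_pos _), if_pos rfl]
    ring
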